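/- arXiv:2009.13745 — 3 statements merged into one kernel-verified Lean document; each statement's English description precedes it below -/
import Mathlib

section
/- Let M and M̄ be natural numbers with 3 ≤ M ≤ 13 and 1 ≤ M̄ ≤ M − 2, let S be a finite set of integers each of which is at least 2, with |S| ≥ 2 and gcd of the elements of S equal to 1, and let L > 0 and γ > 0 be real numbers. Then 3/(M̄·L·γ) > (1/|S|²) · Σ_{κ∈S} 3/(κ²·L·γ). That is, provided the number of radar transmit antennas satisfies M ≤ 13, the mean-squared-error lower bound σ̄²_η = 3/(M̄Lγ) of the coherent accumulation estimator (CAE) always exceeds the mean-squared-error lower bound σ̆²_η = (1/M̆²)Σ_{κ∈S} 3/(κ²Lγ) of the Chinese remainder theorem estimator (CRE), i.e., CRE has better asymptotic performance than CAE. -/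
open Finset

/-- For an FH-MIMO radar with `M ≤ 13` transmit antennas, the MSE lower bound
`σ̄²_η = 3/(M̄Lγ)` of the coherent accumulation estimator (CAE) always exceeds the
MSE lower bound `σ̆²_η = (1/M̆²)·Σ_{κ∈S} 3/(κ²Lγ)` of the Chinese remainder theorem
estimator (CRE), i.e., CRE has better asymptotic performance. -/
theorem cre_beats_cae (M Mbar : ℕ) (hM3 : 3 ≤ M) (hM13 : M ≤ 13)
    (hMbar1 : 1 ≤ Mbar) (hMbar2 : Mbar ≤ M - 2)
    (S : Finset ℤ) (hS2 : ∀ κ ∈ S, (2 : ℤ) ≤ κ) (hScard : 2 ≤ S.card)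
    (hgcd : S.gcd id = 1)
    (L γ : ℝ) (hL : 0 < L) (hγ : 0 < γ) :
    3 / (Mbar * L * γ) >
      (1 / (S.card : ℝ) ^ 2) * ∑ κ ∈ S, 3 / ((κ : ℝ) ^ 2 * L * γ) := by
  have hLγ : 0 < L * γ := mul_pos hL hγ
  set n := S.card with hn
  have hn2 : (2 : ℝ) ≤ (n : ℝ) := by exact_mod_cast hScard
  have hMbar11 : (Mbar : ℝ) ≤ 11 := by
    have : Mbar ≤ 11 := le_trans hMbar2 (by omega)
    exact_mod_cast this
  have hMbarpos : (0 : ℝ) < Mbar := by exact_mod_cast hMbar1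
  -- rewrite the sum
  have hrw : ∑ κ ∈ S, 3 / ((κ : ℝ) ^ 2 * L * γ) =
      (3 / (L * γ)) * ∑ κ ∈ S, 1 / (κ : ℝ) ^ 2 := by
    rw [Finset.mul_sum]
    refine Finset.sum_congr rfl fun κ hκ => ?_
    have hκ2 : (2 : ℝ) ≤ (κ : ℝ) := by exact_mod_cast hS2 κ hκ
    have : (κ : ℝ) ≠ 0 := by linarith
    field_simp
  -- bound on the sum of reciprocal squares
  have hsum : ∑ κ ∈ S, 1 / (κ : ℝ) ^ 2 ≤ (n : ℝ) / 9 + 5 / 36 := by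
    have h1 : ∑ κ ∈ S, 1 / (κ : ℝ) ^ 2 ≤
        ∑ κ ∈ S, ((1 : ℝ) / 9 + if κ = 2 then 5 / 36 else 0) := by
      refine Finset.sum_le_sum fun κ hκ => ?_
      by_cases h : κ = 2
      · subst h; norm_num
      · have hκ2 : (2 : ℤ) ≤ κ := hS2 κ hκ
        have hκ3 : (3 : ℤ) ≤ κ := by omega
        have hκ3' : (3 : ℝ) ≤ (κ : ℝ) := by exact_mod_cast hκ3
        have : (9 : ℝ) ≤ (κ : ℝ) ^ 2 := by nlinarith
        rw [if_neg h, add_zero, div_le_div_iff₀ (by positivity) (by norm_num : (0:ℝ) < 9)]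
        linarith
    have h2 : ∑ κ ∈ S, ((1 : ℝ) / 9 + if κ = 2 then 5 / 36 else 0) =
        (n : ℝ) / 9 + ∑ κ ∈ S, (if κ = 2 then (5 : ℝ) / 36 else 0) := by
      rw [Finset.sum_add_distrib, Finset.sum_const, hn]
      push_cast; ring
    have h3 : ∑ κ ∈ S, (if κ = 2 then (5 : ℝ) / 36 else 0) ≤ 5 / 36 := by
      rw [Finset.sum_ite_eq' S (2 : ℤ) (fun _ => (5 : ℝ) / 36)]
      split <;> norm_num
    linarith
  have hsumnonneg : (0 : ℝ) ≤ ∑ κ ∈ S, 1 / (κ : ℝ) ^ 2 :=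
    Finset.sum_nonneg fun κ hκ => by positivity
  -- key numeric inequality
  have hkey : (1 / (n : ℝ) ^ 2) * ∑ κ ∈ S, 1 / (κ : ℝ) ^ 2 < 1 / (Mbar : ℝ) := by
    have hnpos : (0 : ℝ) < (n : ℝ) ^ 2 := by positivity
    have h1 : (1 / (n : ℝ) ^ 2) * ∑ κ ∈ S, 1 / (κ : ℝ) ^ 2 ≤
        (1 / (n : ℝ) ^ 2) * ((n : ℝ) / 9 + 5 / 36) := by
      apply mul_le_mul_of_nonneg_left hsum (by positivity)
    have h2 : (1 / (n : ℝ) ^ 2) * ((n : ℝ) / 9 + 5 / 36) < 1 / 11 := by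
      rw [div_mul_eq_mul_div, one_mul, div_lt_div_iff₀ hnpos (by norm_num)]
      nlinarith
    have h3 : (1 : ℝ) / 11 ≤ 1 / (Mbar : ℝ) :=
      one_div_le_one_div_of_le hMbarpos hMbar11
    linarith
  rw [hrw]
  have hA : (0 : ℝ) < 3 / (L * γ) := by positivity
  calc (1 / (n : ℝ) ^ 2) * ((3 / (L * γ)) * ∑ κ ∈ S, 1 / (κ : ℝ) ^ 2)
      = (3 / (L * γ)) * ((1 / (n : ℝ) ^ 2) * ∑ κ ∈ S, 1 / (κ : ℝ) ^ 2) := by ring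
    _ < (3 / (L * γ)) * (1 / (Mbar : ℝ)) := by
        exact mul_lt_mul_of_pos_left hkey hA
    _ = 3 / ((Mbar : ℝ) * L * γ) := by
        field_simp
end

section
/- Let κ₁ and κ₂ be coprime positive integers, and let θ, θ′ ∈ [−π, π). If κ₁·θ ≡ κ₁·θ′ (mod 2π) and κ₂·θ ≡ κ₂·θ′ (mod 2π), then θ = θ′. Consequently, when the absolute second-order hopping-frequency differences used by the Chinese remainder theorem estimator are coprime, the phase ∠ω_η ∈ [−π, π) is the unique value consistent with the observed (ambiguous) phases ∠Ȳ modulo 2π across those indices, so the ambiguity degrees d* for which the candidate estimates (∠Ȳ + 2πd)/κ coincide identify ∠ω_η unambiguously. -/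
/-- Chinese-remainder-type uniqueness for the CRE timing-offset estimator: if
`κ₁, κ₂` are coprime positive integers and `θ, θ′ ∈ [−π, π)` satisfy
`κ₁θ ≡ κ₁θ′ (mod 2π)` and `κ₂θ ≡ κ₂θ′ (mod 2π)`, then `θ = θ′`; hence the phase
`∠ω_η` is identified unambiguously from the ambiguous per-index phases. -/
theorem cre_phase_uniqueness (κ₁ κ₂ : ℤ) (hκ₁ : 0 < κ₁) (hκ₂ : 0 < κ₂)
    (hcop : IsCoprime κ₁ κ₂)
    (θ θ' : ℝ) (hθ₁ : -Real.pi ≤ θ) (hθ₂ : θ < Real.pi)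
    (hθ'₁ : -Real.pi ≤ θ') (hθ'₂ : θ' < Real.pi)
    (h₁ : ∃ d : ℤ, (κ₁ : ℝ) * θ - (κ₁ : ℝ) * θ' = 2 * Real.pi * d)
    (h₂ : ∃ d : ℤ, (κ₂ : ℝ) * θ - (κ₂ : ℝ) * θ' = 2 * Real.pi * d) :
    θ = θ' := by
  obtain ⟨d₁, hd₁⟩ := h₁
  obtain ⟨d₂, hd₂⟩ := h₂
  obtain ⟨a, b, hab⟩ := hcop
  have key : θ - θ' = 2 * Real.pi * ((a * d₁ + b * d₂ : ℤ) : ℝ) := by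
    have h : (a * κ₁ + b * κ₂ : ℤ) = 1 := hab
    have h' : ((a : ℝ) * κ₁ + (b : ℝ) * κ₂) = 1 := by exact_mod_cast h
    push_cast
    linear_combination (a : ℝ) * hd₁ + (b : ℝ) * hd₂ - (θ - θ') * h'
  set d : ℤ := a * d₁ + b * d₂ with hd
  have hpi := Real.pi_pos
  have habs : |θ - θ'| < 2 * Real.pi := by
    rw [abs_lt]; constructor <;> linarith
  rw [key] at habs
  have hdz : d = 0 := by
    by_contra hne
    have : (1 : ℝ) ≤ |(d : ℝ)| := by
      have : (1 : ℤ) ≤ |d| := Int.one_le_abs hne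
      exact_mod_cast this
    rw [abs_mul] at habs
    have h2p : |2 * Real.pi| = 2 * Real.pi := abs_of_pos (by linarith)
    rw [h2p] at habs
    nlinarith
  rw [hdz] at key
  simp at key
  linarith
end

section
/- Let L be a positive even integer, M a positive integer, K a positive integer, B, T > 0, η ∈ ℝ, and ρ_0,…,ρ_{M−1} ∈ ℂ. Let k_0,…,k_{M−1} be natural numbers and fix a target index m* with k_{m*} = 0; assume that for every m ≠ m*, the quantity p_m := k_m·B·T/K is an even integer with 0 < p_m < L. Define the noiseless received samples y(i) = Σ_{m=0}^{M−1} ρ_m · exp(−i 2π (k_m B/K)(i·T/L + η)) for i = 0,…,L−1. Then Σ_{i=0}^{L/2−1} y(i) = (L/2)·ρ_{m*}. That is, assigning the zero hopping frequency to antenna m* and even-integer normalized frequencies to all other antennas allows the communication receiver to recover the multi-path composite gain ρ_{m*} exactly (in the noiseless case) from the first half of one hop, free of inter-hop and inter-antenna interference. -/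
open Finset

/-- Noiseless multi-path composite gain recovery: if antenna `m*` uses the zero
hopping frequency (`k_{m*} = 0`) while every other antenna `m` has an even-integer
normalized frequency `p_m = k_m BT/K` with `0 < p_m < L`, then summing the first
`L/2` samples of the hop
`y(i) = Σ_m ρ_m e^{−i2π(k_m B/K)(iT/L + η)}` yields exactly `(L/2)·ρ_{m*}`,
free of inter-hop and inter-antenna interference. -/
theorem multipath_composite_recovery (L M K : ℕ) (hL : 0 < L) (hLeven : Even L)
    (hM : 0 < M) (hK : 0 < K) (B T : ℝ) (hB : 0 < B) (hT : 0 < T) (η : ℝ)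
    (ρ : Fin M → ℂ) (k : Fin M → ℕ) (mstar : Fin M) (hkstar : k mstar = 0)
    (p : Fin M → ℕ)
    (hp : ∀ m, m ≠ mstar → (p m : ℝ) = (k m : ℝ) * B * T / K)
    (hpeven : ∀ m, m ≠ mstar → Even (p m))
    (hppos : ∀ m, m ≠ mstar → 0 < p m)
    (hpL : ∀ m, m ≠ mstar → p m < L) :
    ∑ i ∈ Finset.range (L / 2),
        (∑ m : Fin M, ρ m *
          Complex.exp (-Complex.I * 2 * Real.pi * ((k m : ℝ) * B / K) *
            ((i : ℝ) * (T / L) + η))) =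
      ((L : ℂ) / 2) * ρ mstar := by
  obtain ⟨q, hq⟩ := hLeven
  have hq2 : L = 2 * q := by omega
  have hq0 : q ≠ 0 := by omega
  have hL2 : L / 2 = q := by omega
  have hLC : (L : ℂ) ≠ 0 := by exact_mod_cast hL.ne'
  have hKC : (K : ℂ) ≠ 0 := by exact_mod_cast hK.ne'
  rw [Finset.sum_comm]
  have hmain : ∀ m : Fin M, m ≠ mstar →
      (∑ i ∈ Finset.range (L / 2), ρ m *
        Complex.exp (-Complex.I * 2 * Real.pi * ((k m : ℝ) * B / K) *
          ((i : ℝ) * (T / L) + η))) = 0 := by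
    intro m hm
    set x : ℂ := Complex.exp (-Complex.I * 2 * Real.pi * ((p m : ℝ) / L)) with hx
    have hpC : ((p m : ℕ) : ℂ) = ((k m : ℕ) : ℂ) * (B : ℂ) * (T : ℂ) / (K : ℂ) := by
      have := hp m hm
      push_cast
      exact_mod_cast congrArg Complex.ofReal this
    have hterm : ∀ i : ℕ,
        Complex.exp (-Complex.I * 2 * Real.pi * ((k m : ℝ) * B / K) *
          ((i : ℝ) * (T / L) + η)) =
        Complex.exp (-Complex.I * 2 * Real.pi * ((k m : ℝ) * B / K) * η) * x ^ i := by
      intro i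
      rw [hx, ← Complex.exp_nat_mul, ← Complex.exp_add]
      congr 1
      have key : ((p m : ℕ) : ℂ) / L = ((k m : ℕ) : ℂ) * B / K * (T / L) := by
        rw [hpC]; field_simp
      push_cast at key ⊢
      linear_combination (Complex.I * 2 * (Real.pi : ℂ) * (i : ℂ)) * key
    have hxL : x ^ (L / 2) = 1 := by
      obtain ⟨r, hr⟩ := hpeven m hm
      rw [hx, ← Complex.exp_nat_mul, hL2]
      have : (q : ℂ) * (-Complex.I * 2 * Real.pi * ((p m : ℝ) / L)) =
          ((-(r : ℤ)) : ℂ) * (2 * Real.pi * Complex.I) := by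
        have hpr : ((p m : ℕ) : ℂ) = 2 * (r : ℂ) := by push_cast [hr]; ring
        rw [hq2]
        push_cast [hpr]
        have h2q : (2 * q : ℂ) ≠ 0 := by
          push_cast
          simp [hq0]
        field_simp
      rw [this]
      exact Complex.exp_eq_one_iff.2 ⟨-(r : ℤ), by push_cast; ring⟩
    have hx1 : x ≠ 1 := by
      intro h
      rw [hx, Complex.exp_eq_one_iff] at h
      obtain ⟨n, hn⟩ := h
      have hne : (2 : ℂ) * Real.pi * Complex.I ≠ 0 := by
        simp [Real.pi_ne_zero, Complex.I_ne_zero]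
      have h2 : -(((p m : ℝ) / L : ℝ) : ℂ) = (n : ℂ) := by
        apply mul_right_cancel₀ hne
        push_cast at hn ⊢
        linear_combination hn
      have h3 : -((p m : ℝ) / L) = (n : ℝ) := by exact_mod_cast h2
      have hlt : 0 < (p m : ℝ) / L := by
        apply div_pos
        · exact_mod_cast hppos m hm
        · exact_mod_cast hL
      have hlt2 : (p m : ℝ) / L < 1 := by
        rw [div_lt_one (by exact_mod_cast hL)]
        exact_mod_cast hpL m hm
      have : (-1 : ℝ) < n ∧ (n : ℝ) < 0 := by constructor <;> nlinarith
      have h4 : (-1 : ℤ) < n ∧ n < 0 := by exact_mod_cast this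
      omega
    calc (∑ i ∈ Finset.range (L / 2), ρ m *
        Complex.exp (-Complex.I * 2 * Real.pi * ((k m : ℝ) * B / K) *
          ((i : ℝ) * (T / L) + η)))
        = ρ m * Complex.exp (-Complex.I * 2 * Real.pi * ((k m : ℝ) * B / K) * η) *
            ∑ i ∈ Finset.range (L / 2), x ^ i := by
          rw [Finset.mul_sum]
          exact Finset.sum_congr rfl fun i _ => by rw [hterm i]; ring
      _ = 0 := by
          rw [geom_sum_eq hx1, hxL]
          simp
  rw [Finset.sum_eq_single mstar (fun m _ hm => hmain m hm) (by simp)]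
  have : ∀ i ∈ Finset.range (L / 2), ρ mstar *
      Complex.exp (-Complex.I * 2 * Real.pi * ((k mstar : ℝ) * B / K) *
        ((i : ℝ) * (T / L) + η)) = ρ mstar := by
    intro i _
    rw [hkstar]
    simp
  rw [Finset.sum_congr rfl this, Finset.sum_const, Finset.card_range, hL2, hq2,
    nsmul_eq_mul]
  push_cast
  ring
end
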